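/- Let f be a form of degree d in n variables over k and let A = (a_{ij}) ∈ k^{n×n}. Then there exists a form g of degree d in n variables such that ∂g/∂x_j = Σ_{i=1}^n (∂f/∂x_i)·a_{ij} for all j = 1,…,n, if and only if A ∈ Z(f). -/

import Mathlib

open MvPolynomial Matrix

/-- The Hessian matrix of a multivariate polynomial. -/
noncomputable def hessian {k : Type*} [Field k] {σ : Type*} (f : MvPolynomial σ k) :
    Matrix σ σ (MvPolynomial σ k) :=
  Matrix.of fun i j => pderiv i (pderiv j f)

/-- The center of a form `f`: scalar matrices `X` such that `H · X` is symmetric,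
where `H` is the Hessian matrix of `f`. -/
def center {k : Type*} [Field k] {σ : Type*} [Fintype σ] (f : MvPolynomial σ k) :
    Set (Matrix σ σ k) :=
  {X | (hessian f * X.map (C : k → MvPolynomial σ k))ᵀ
        = hessian f * X.map (C : k → MvPolynomial σ k)}

/-!
The row vector `ω = ∇f · A` is the coefficient vector of a polynomial 1-form whose Jacobian
`(∂ᵢ ωⱼ)` is `H · A`, so `A ∈ Z(f)` says exactly that `ω` is closed. An exact form is closed
because second partial derivatives commute. Conversely, the coefficients of `ω` are forms of
degree `d - 1`, and for a closed form with such coefficients Euler's identity shows that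
`g = d⁻¹ · ∑ⱼ xⱼ ωⱼ` is a primitive; this is where `d` must be invertible in `k`.
-/

namespace MvPolynomial

lemma pderiv_pderiv_comm {R σ : Type*} [CommSemiring R] (i j : σ) (f : MvPolynomial σ R) :
    pderiv i (pderiv j f) = pderiv j (pderiv i f) := by
  classical
  induction f using MvPolynomial.induction_on' with
  | monomial s a =>
    rcases eq_or_ne i j with rfl | h
    · rfl
    · simp only [pderiv_monomial]
      rw [tsub_right_comm]
      congr 1
      rw [Finsupp.tsub_apply, Finsupp.tsub_apply, Finsupp.single_eq_of_ne' h,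
        Finsupp.single_eq_of_ne' h.symm, Nat.sub_zero, Nat.sub_zero, mul_right_comm]
  | add p q hp hq => simp only [map_add, hp, hq]

lemma pderiv_sum_X_mul {R σ : Type*} [CommSemiring R] [Fintype σ] (F : σ → MvPolynomial σ R)
    (j : σ) : pderiv j (∑ l, X l * F l) = F j + ∑ l, X l * pderiv j (F l) := by
  classical
  simp only [map_sum, pderiv_mul, Finset.sum_add_distrib, pderiv_X, Pi.single_apply,
    ite_mul, one_mul, zero_mul, Finset.sum_ite_eq', Finset.mem_univ, if_true]

theorem exists_isHomogeneous_pderiv_eq_of_pderiv_symm {k σ : Type*} [Field k] [Fintype σ]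
    {m : ℕ} (hm : ((m + 1 : ℕ) : k) ≠ 0) (F : σ → MvPolynomial σ k)
    (hF : ∀ j, (F j).IsHomogeneous m) (hsymm : ∀ i j, pderiv i (F j) = pderiv j (F i)) :
    ∃ g : MvPolynomial σ k, g.IsHomogeneous (m + 1) ∧ ∀ j, pderiv j g = F j := by
  refine ⟨C ((m + 1 : ℕ) : k)⁻¹ * ∑ l, X l * F l, ?_, fun j => ?_⟩
  · refine IsHomogeneous.C_mul (IsHomogeneous.sum _ _ _ fun l _ => ?_) _
    rw [add_comm]
    exact (isHomogeneous_X k l).mul (hF l)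
  · have euler : ∑ l, X l * pderiv j (F l) = m • F j := by
      simp only [hsymm j]
      exact (hF j).sum_X_mul_pderiv
    rw [pderiv_C_mul, pderiv_sum_X_mul, euler, ← succ_nsmul', nsmul_eq_mul,
      ← map_natCast (C : k →+* MvPolynomial σ k), ← mul_assoc, ← C_mul, inv_mul_cancel₀ hm,
      C_1, one_mul]

end MvPolynomial

lemma natCast_ne_zero_of_ringChar {k : Type*} [Field k] {d : ℕ} (hd : d ≠ 0)
    (hchar : ringChar k = 0 ∨ d < ringChar k) : (d : k) ≠ 0 := by
  rw [Ne, ringChar.spec]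
  rcases hchar with h | h
  · rwa [h, zero_dvd_iff]
  · exact fun hdvd => (Nat.le_of_dvd (Nat.pos_of_ne_zero hd) hdvd).not_gt h

lemma mem_center_iff_pderiv_symm {k σ : Type*} [Field k] [Fintype σ] (f : MvPolynomial σ k)
    (A : Matrix σ σ k) :
    A ∈ center f ↔ ∀ i j, pderiv i (∑ l, pderiv l f * C (A l j)) =
      pderiv j (∑ l, pderiv l f * C (A l i)) := by
  simp only [center, Set.mem_ofPred_eq, ← Matrix.ext_iff, Matrix.transpose_apply,
    Matrix.mul_apply, hessian, Matrix.of_apply, Matrix.map_apply, map_sum, pderiv_mul, pderiv_C,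
    mul_zero, add_zero]
  exact ⟨fun h i j => h j i, fun h i j => h j i⟩

/-- the row vector of partial derivatives of `f` multiplied by a scalar
matrix `A` lifts to the gradient of a form `g` of degree `d` iff `A` belongs to the
center of `f`. -/
theorem lift_gradient_iff_mem_center {k : Type*} [Field k] {n d : ℕ} (hd : 3 ≤ d)
    (hchar : ringChar k = 0 ∨ d < ringChar k)
    (f : MvPolynomial (Fin n) k) (hf : f.IsHomogeneous d)
    (A : Matrix (Fin n) (Fin n) k) :
    (∃ g : MvPolynomial (Fin n) k, g.IsHomogeneous d ∧
        ∀ j : Fin n, pderiv j g = ∑ i : Fin n, pderiv i f * C (A i j)) ↔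
      A ∈ center f := by
  set ω : Fin n → MvPolynomial (Fin n) k := fun j => ∑ i, pderiv i f * C (A i j)
  rw [mem_center_iff_pderiv_symm]
  constructor
  · rintro ⟨g, -, hg⟩ i j
    simp only [← hg]
    exact pderiv_pderiv_comm i j g
  · intro hclosed
    obtain ⟨m, rfl⟩ : ∃ m, d = m + 1 := ⟨d - 1, by omega⟩
    have hω : ∀ j, (ω j).IsHomogeneous m := fun j =>
      IsHomogeneous.sum _ _ _ fun i _ => (hf.pderiv (i := i)).mul (isHomogeneous_C _ _)
    exact exists_isHomogeneous_pderiv_eq_of_pderiv_symm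
      (natCast_ne_zero_of_ringChar (by omega) hchar) ω hω hclosed
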